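/- For any two rooted binary phylogenetic trees T¹ and T² on the same leaf set [n], the Krull dimensions of the quotient rings R/I_{T¹} and R/I_{T²} are equal; that is, the dimension of the CFN-MC toric variety depends only on the number of leaves n and not on the topology of the tree. -/

import Mathlib

/-!
Both quotients have Krull dimension `n`.

Upper bound: `φ_T` embeds `R/I_T` into the polynomial ring on the `n` variables `b₀, b_v`
(a binary tree on `n` leaves has `n - 1` internal vertices), so `R/I_T` has transcendence degree
at most `n`. Along a chain of primes `p₀ < ⋯ < p_m` in any algebra over a field, elements
`x_i ∈ p_{i+1} \ p_i` are algebraically independent, hence `dim ≤ trdeg ≤ n`.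

Lower bound: composing `φ_T` with the substitutions that set the `b_v` to zero one at a time,
and finally `b₀`, gives `n + 1` prime kernels containing `I_T`. The chain is strict because
`q_{ab}` with `mrca(a, b) = v` maps to `b₀ b_v`, and `q_0` maps to `b₀`.
-/

/-- Rooted binary trees with leaves labeled by natural numbers. -/
inductive PhyloTree where
  | leaf : ℕ → PhyloTree
  | node : PhyloTree → PhyloTree → PhyloTree
deriving DecidableEq

namespace PhyloTree

/-- The set of leaf labels of a tree. -/
def leaves : PhyloTree → Finset ℕ
  | leaf i => {i}
  | node l r => leaves l ∪ leaves r

/-- The list of leaf labels (left-to-right). -/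
def leafList : PhyloTree → List ℕ
  | leaf i => [i]
  | node l r => leafList l ++ leafList r

/-- `t` is a rooted binary phylogenetic tree on leaf set `[n] = {0, …, n-1}`:
its leaves are bijectively labeled by `{0, …, n-1}`. -/
def IsPhylo (n : ℕ) (t : PhyloTree) : Prop :=
  t.leafList.Nodup ∧ t.leafList.toFinset = Finset.range n

/-- The subtrees of `t`; these are identified with the vertices of `t`. -/
def subtrees : PhyloTree → Finset PhyloTree
  | leaf i => {leaf i}
  | node l r => insert (node l r) (subtrees l ∪ subtrees r)

/-- Whether the root of the tree is an internal (non-leaf) vertex. -/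
def isInternal : PhyloTree → Bool
  | leaf _ => false
  | node _ _ => true

/-- The internal vertices of `t`, identified with the subtrees rooted at them. -/
def internalVertices (t : PhyloTree) : Finset PhyloTree :=
  t.subtrees.filter (fun s => s.isInternal)

/-- The most recent common ancestor of the leaves labeled `i` and `j`,
identified with the subtree rooted at it. -/
def mrca (t : PhyloTree) (i j : ℕ) : PhyloTree :=
  match t with
  | leaf a => leaf a
  | node l r =>
    if i ∈ l.leaves ∧ j ∈ l.leaves then mrca l i j
    else if i ∈ r.leaves ∧ j ∈ r.leaves then mrca r i j
    else node l r

/-- The most recent common ancestor of a set `p` of leaf labels. -/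
def mrcaSet (t : PhyloTree) (p : Finset ℕ) : PhyloTree :=
  match t with
  | leaf a => leaf a
  | node l r =>
    if p ⊆ l.leaves then mrcaSet l p
    else if p ⊆ r.leaves then mrcaSet r p
    else node l r

/-- A vertex (= subtree) is a top-most node of a path in the system of disjoint
paths `𝔓(x)` iff an odd number of elements of `x` lies below each of its two
children. -/
def isTopOf (x : Finset ℕ) : PhyloTree → Bool
  | leaf _ => false
  | node l r => decide (Odd (x ∩ l.leaves).card) && decide (Odd (x ∩ r.leaves).card)

/-- `top(x)`: the set of top-most nodes of the paths in the system `𝔓(x)` of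
pairwise disjoint paths joining the leaves in `x`. -/
def topSet (t : PhyloTree) (x : Finset ℕ) : Finset PhyloTree :=
  t.subtrees.filter (fun s => isTopOf x s)

/-- The vertices of the path in `t` between the leaves of the pair `p` (more
generally, the vertices of the smallest subtree of `t` spanning `p`). -/
def pathSet (t : PhyloTree) (p : Finset ℕ) : Finset PhyloTree :=
  (mrcaSet t p).subtrees.filter (fun s => ∃ ℓ ∈ p, ℓ ∈ s.leaves)

/-- `u` is a strict descendant of `w`. -/
def IsStrictDescendant (u w : PhyloTree) : Prop :=
  u ≠ w ∧ u ∈ w.subtrees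

end PhyloTree

/-- `ℤ₂ⁿ`-vectors with an even number of ones, encoded as even-size subsets of `Fin n`. -/
abbrev EvenSubsets (n : ℕ) := {x : Finset (Fin n) // Even x.card}

/-- Forget the bound `n`, regarding a set of coordinates as a set of leaf labels. -/
def EvenSubsets.toNat {n : ℕ} (x : EvenSubsets n) : Finset ℕ := x.1.image Fin.val

/-- The vector `1_{i,j}` with ones exactly in positions `i ≠ j`. -/
def pairIdx {n : ℕ} (i j : Fin n) (h : i ≠ j) : EvenSubsets n :=
  ⟨{i, j}, by rw [Finset.card_pair h]; exact ⟨1, rfl⟩⟩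

open MvPolynomial in
/-- The monomial map `φ_T : ℂ[q_x] → ℂ[b₀, b_v]`, `q_x ↦ b₀ ∏_{v ∈ top(x)} b_v`. -/
noncomputable def phiCFNMC (n : ℕ) (t : PhyloTree) :
    MvPolynomial (EvenSubsets n) ℂ →ₐ[ℂ] MvPolynomial (Option PhyloTree) ℂ :=
  aeval (fun x => X none * ∏ s ∈ t.topSet x.toNat, X (some s))

/-- The CFN-MC ideal `I_T = ker φ_T`. -/
noncomputable def cfnIdeal (n : ℕ) (t : PhyloTree) : Ideal (MvPolynomial (EvenSubsets n) ℂ) :=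
  RingHom.ker (phiCFNMC n t)

universe u

open MvPolynomial

namespace MvPolynomial

variable {k : Type*} [CommSemiring k]

theorem aeval_eq_eval₂_finSuccEquiv {A : Type*} [CommSemiring A] [Algebra k A] {m : ℕ}
    (x : Fin (m + 1) → A) (Q : MvPolynomial (Fin (m + 1)) k) :
    aeval x Q = (finSuccEquiv k m Q).eval₂ (aeval (Fin.tail x)).toRingHom (x 0) := by
  induction Q using MvPolynomial.induction_on with
  | C a => simp [finSuccEquiv_apply, Polynomial.eval₂_C]
  | add p q hp hq => simp [hp, hq]
  | mul_X p i hp =>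
    simp only [map_mul, hp, aeval_X, Polynomial.eval₂_mul]
    congr 1
    cases i using Fin.cases <;> simp [finSuccEquiv_X_zero, finSuccEquiv_X_succ, Fin.tail]

variable (k) in
noncomputable def zeroOutside {σ : Type*} (S : Set σ) : MvPolynomial σ k →ₐ[k] MvPolynomial σ k :=
  aeval (S.indicator X)

@[simp]
theorem zeroOutside_X_of_mem {σ : Type*} {S : Set σ} {v : σ} (hv : v ∈ S) :
    zeroOutside k S (X v) = X v := by
  rw [zeroOutside, aeval_X, Set.indicator_of_mem hv]

@[simp]
theorem zeroOutside_X_of_notMem {σ : Type*} {S : Set σ} {v : σ} (hv : v ∉ S) :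
    zeroOutside k S (X v) = 0 := by
  rw [zeroOutside, aeval_X, Set.indicator_of_notMem hv]

theorem zeroOutside_comp_zeroOutside {σ : Type*} {S T : Set σ} (hST : S ⊆ T) :
    (zeroOutside k S).comp (zeroOutside k T) = zeroOutside k S := by
  refine algHom_ext fun v => ?_
  by_cases hv : v ∈ T
  · simp [hv]
  · simp [hv, mt (@hST v) hv]

end MvPolynomial

section KrullDimension

variable {k : Type u} [Field k]

section Chain

variable {A : Type*} [CommRing A] [Algebra k A]

theorem aeval_notMem_of_chain {m : ℕ} (p : Fin (m + 1) → Ideal A) (hp : ∀ i, (p i).IsPrime)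
    (hmono : ∀ i : Fin m, p i.castSucc ≤ p i.succ) (x : Fin m → A)
    (hx : ∀ i, x i ∈ p i.succ) (hx' : ∀ i, x i ∉ p i.castSucc)
    {Q : MvPolynomial (Fin m) k} (hQ : Q ≠ 0) : aeval x Q ∉ p 0 := by
  induction m with
  | zero =>
    rw [eq_C_of_isEmpty Q, aeval_C]
    have hc : coeff 0 Q ≠ 0 := fun h => hQ (by rw [eq_C_of_isEmpty Q, h, C_0])
    exact fun hmem => (hp 0).ne_top
      (Ideal.eq_top_of_isUnit_mem _ hmem ((IsUnit.mk0 _ hc).map (algebraMap k A)))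
  | succ m ih =>
    -- Write `Q = X₀ ^ a * P` with `P(0, X₁, …) ≠ 0`. If `Q(x) ∈ p₀` then `P(x) ∈ p₀ ⊆ p₁` since
    -- `x₀ ∉ p₀`, and then `P(0, x₁, …) ∈ p₁` since `x₀ ∈ p₁`: this contradicts the induction
    -- hypothesis for the chain `p₁ ≤ ⋯ ≤ p_m`.
    set e : Polynomial (MvPolynomial (Fin m) k) →+* A :=
      Polynomial.eval₂RingHom (aeval (Fin.tail x)).toRingHom (x 0)
    obtain ⟨P, hQP, hP⟩ := (finSuccEquiv k m Q).exists_eq_pow_rootMultiplicity_mul_and_not_dvd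
      ((EmbeddingLike.map_ne_zero_iff).2 hQ) 0
    rw [map_zero, sub_zero, Polynomial.X_dvd_iff] at hP
    intro hmem
    rw [aeval_eq_eval₂_finSuccEquiv, hQP, map_zero, sub_zero] at hmem
    change e (Polynomial.X ^ _ * P) ∈ p 0 at hmem
    rw [map_mul, map_pow, show e Polynomial.X = x 0 from Polynomial.eval₂_X _ _] at hmem
    have hP0 : e P ∈ p 1 :=
      hmono 0 (((hp 0).mem_or_mem hmem).resolve_left fun h => hx' 0 ((hp 0).mem_of_pow_mem _ h))
    obtain ⟨D, hD⟩ := Polynomial.X_dvd_sub_C (p := P)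
    have hdiff : e P - aeval (Fin.tail x) (P.coeff 0) = x 0 * e D := by
      have hC : e (Polynomial.C (P.coeff 0)) = aeval (Fin.tail x) (P.coeff 0) :=
        Polynomial.eval₂_C _ _
      rw [← hC, ← map_sub, hD, map_mul]
      exact congrArg (· * e D) (Polynomial.eval₂_X _ _)
    refine ih (fun i => p i.succ) (fun i => hp _) (fun i => hmono i.succ) (Fin.tail x)
      (fun i => hx i.succ) (fun i => hx' i.succ) hP ?_
    have := Ideal.sub_mem _ hP0 (Ideal.mul_mem_right (e D) _ (hx 0))
    rwa [← hdiff, sub_sub_cancel] at this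

theorem algebraicIndependent_of_chain {m : ℕ} (p : Fin (m + 1) → Ideal A)
    (hp : ∀ i, (p i).IsPrime) (hmono : ∀ i : Fin m, p i.castSucc ≤ p i.succ) (x : Fin m → A)
    (hx : ∀ i, x i ∈ p i.succ) (hx' : ∀ i, x i ∉ p i.castSucc) : AlgebraicIndependent k x :=
  algebraicIndependent_iff.2 fun Q hQ => by
    by_contra h
    exact aeval_notMem_of_chain p hp hmono x hx hx' h (hQ ▸ (p 0).zero_mem)

theorem ringKrullDim_le_of_trdeg_le {n : ℕ} (h : Algebra.trdeg k A ≤ n) :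
    ringKrullDim A ≤ n := by
  refine iSup_le fun P => ?_
  have hlt (i : Fin P.length) : (P i.castSucc).asIdeal < (P i.succ).asIdeal := P.step i
  choose x hx hx' using fun i => SetLike.exists_of_lt (hlt i)
  have hind := algebraicIndependent_of_chain (k := k) (fun i => (P i).asIdeal)
    (fun i => (P i).isPrime) (fun i => (hlt i).le) x hx hx'
  have hcard := hind.lift_cardinalMk_le_trdeg
  rw [Cardinal.mk_fin, Cardinal.lift_natCast, Cardinal.lift_uzero] at hcard
  exact_mod_cast hcard.trans h

end Chain

theorem trdeg_quotient_ker_le_card {R σ : Type u} [CommRing R] [Algebra k R]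
    (φ : R →ₐ[k] MvPolynomial σ k) (s : Finset σ) (hφ : φ.range ≤ supported k (s : Set σ)) :
    Algebra.trdeg k (R ⧸ RingHom.ker φ) ≤ s.card := by
  have hmem (a : R ⧸ RingHom.ker φ) : Ideal.kerLiftAlg φ a ∈ supported k (s : Set σ) := by
    obtain ⟨r, rfl⟩ := Ideal.Quotient.mk_surjective a
    exact hφ ⟨r, rfl⟩
  calc Algebra.trdeg k (R ⧸ RingHom.ker φ) ≤ Algebra.trdeg k (supported k (s : Set σ)) :=
        trdeg_le_of_injective ((Ideal.kerLiftAlg φ).codRestrict _ hmem)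
          fun a b hab => Ideal.kerLiftAlg_injective φ (congrArg Subtype.val hab)
    _ = Algebra.trdeg k (MvPolynomial (s : Set σ) k) := (supportedEquivMvPolynomial _).trdeg_eq
    _ = s.card := by simp [MvPolynomial.trdeg_of_isDomain]

theorem le_ringKrullDim_quotient_of_strictMono {R : Type*} [CommRing R] (I : Ideal R) {m : ℕ}
    (p : Fin (m + 1) → Ideal R) (hp : ∀ i, (p i).IsPrime) (hI : ∀ i, I ≤ p i)
    (hmono : StrictMono p) : (m : WithBot ℕ∞) ≤ ringKrullDim (R ⧸ I) := by
  rw [ringKrullDim_quotient]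
  let P : LTSeries (PrimeSpectrum.zeroLocus (R := R) I) :=
    ⟨m, fun i => ⟨⟨p i, hp i⟩, (PrimeSpectrum.mem_zeroLocus _ _).2 (hI i)⟩,
      fun i => hmono Fin.castSucc_lt_succ⟩
  exact Order.LTSeries.length_le_krullDim P

theorem le_ringKrullDim_quotient_ker {R σ : Type*} [CommRing R] [Algebra k R]
    (φ : R →ₐ[k] MvPolynomial σ k) (S : ℕ → Set σ) (hS : Antitone S) {m : ℕ}
    (h : ∀ i < m, ∃ r, zeroOutside k (S (i + 1)) (φ r) = 0 ∧ zeroOutside k (S i) (φ r) ≠ 0) :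
    (m : WithBot ℕ∞) ≤ ringKrullDim (R ⧸ RingHom.ker φ) := by
  let p (i : Fin (m + 1)) := RingHom.ker ((zeroOutside k (S i)).comp φ)
  refine le_ringKrullDim_quotient_of_strictMono _ p (fun i => RingHom.ker_isPrime _)
    (fun i r hr => by simp [p, RingHom.mem_ker.1 hr]) (Fin.strictMono_iff_lt_succ.2 fun i => ?_)
  obtain ⟨r, hr, hr'⟩ := h i i.2
  refine lt_of_le_of_ne (fun a ha => ?_) fun heq => hr' ?_
  · simp only [p, RingHom.mem_ker, AlgHom.comp_apply, Fin.val_succ, Fin.val_castSucc] at ha ⊢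
    rw [← zeroOutside_comp_zeroOutside (hS (Nat.le_succ i)), AlgHom.comp_apply, ha, map_zero]
  · have : r ∈ p i.castSucc := heq ▸ (by simpa [p] using hr)
    simpa [p] using this

end KrullDimension

namespace PhyloTree

theorem leaves_nonempty : ∀ t : PhyloTree, t.leaves.Nonempty
  | leaf i => Finset.singleton_nonempty i
  | node l _ => (leaves_nonempty l).mono Finset.subset_union_left

theorem leaves_eq_toFinset : ∀ t : PhyloTree, t.leaves = t.leafList.toFinset
  | leaf i => by simp [leaves, leafList]
  | node l r => by simp [leaves, leafList, leaves_eq_toFinset l, leaves_eq_toFinset r]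

theorem IsPhylo.leaves_eq {n : ℕ} {t : PhyloTree} (h : IsPhylo n t) : t.leaves = Finset.range n :=
  (leaves_eq_toFinset t).trans h.2

theorem nodup_node_iff {l r : PhyloTree} : (node l r).leafList.Nodup ↔
    l.leafList.Nodup ∧ r.leafList.Nodup ∧ Disjoint l.leaves r.leaves := by
  rw [leafList, List.nodup_append, leaves_eq_toFinset, leaves_eq_toFinset,
    List.disjoint_toFinset_iff_disjoint, List.disjoint_iff_ne]

theorem leaves_subset_of_mem_subtrees {s : PhyloTree} :
    ∀ {t : PhyloTree}, s ∈ t.subtrees → s.leaves ⊆ t.leaves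
  | leaf i, h => by rw [Finset.mem_singleton.1 h]
  | node l r, h => by
    rw [subtrees, Finset.mem_insert, Finset.mem_union] at h
    rcases h with rfl | h | h
    · exact subset_rfl
    · exact (leaves_subset_of_mem_subtrees h).trans Finset.subset_union_left
    · exact (leaves_subset_of_mem_subtrees h).trans Finset.subset_union_right

theorem nodup_of_mem_subtrees {s : PhyloTree} :
    ∀ {t : PhyloTree}, s ∈ t.subtrees → t.leafList.Nodup → s.leafList.Nodup
  | leaf i, h, hnd => by rwa [Finset.mem_singleton.1 h]
  | node l r, h, hnd => by
    rw [subtrees, Finset.mem_insert, Finset.mem_union] at h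
    rcases h with rfl | h | h
    · exact hnd
    · exact nodup_of_mem_subtrees h (nodup_node_iff.1 hnd).1
    · exact nodup_of_mem_subtrees h (nodup_node_iff.1 hnd).2.1

theorem sizeOf_le_of_mem_subtrees {s : PhyloTree} :
    ∀ {t : PhyloTree}, s ∈ t.subtrees → sizeOf s ≤ sizeOf t
  | leaf i, h => by rw [Finset.mem_singleton.1 h]
  | node l r, h => by
    rw [subtrees, Finset.mem_insert, Finset.mem_union] at h
    rcases h with rfl | h | h
    · exact le_rfl
    all_goals
      have := sizeOf_le_of_mem_subtrees h
      simp only [node.sizeOf_spec]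
      omega

theorem internalVertices_node (l r : PhyloTree) :
    (node l r).internalVertices = insert (node l r) (l.internalVertices ∪ r.internalVertices) := by
  rw [internalVertices, subtrees, Finset.filter_insert, if_pos (by simp [isInternal]),
    Finset.filter_union]
  rfl

theorem card_internalVertices_add_one {t : PhyloTree} (hnd : t.leafList.Nodup) :
    t.internalVertices.card + 1 = t.leaves.card := by
  induction t with
  | leaf i => rfl
  | node l r ihl ihr =>
    obtain ⟨hl, hr, hlr⟩ := nodup_node_iff.1 hnd
    have hmem (s : PhyloTree) (hs : s ∈ l.internalVertices ∪ r.internalVertices) :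
        sizeOf s < sizeOf (node l r) := by
      simp only [node.sizeOf_spec]
      rcases Finset.mem_union.1 hs with hs | hs <;>
        have := sizeOf_le_of_mem_subtrees (Finset.mem_filter.1 hs).1 <;> omega
    have hdisj : Disjoint l.internalVertices r.internalVertices :=
      Finset.disjoint_left.2 fun s hsl hsr =>
        have ⟨a, ha⟩ := leaves_nonempty s
        Finset.disjoint_left.1 hlr (leaves_subset_of_mem_subtrees (Finset.mem_filter.1 hsl).1 ha)
          (leaves_subset_of_mem_subtrees (Finset.mem_filter.1 hsr).1 ha)
    rw [internalVertices_node, Finset.card_insert_of_notMem fun h => (hmem _ h).false,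
      Finset.card_union_of_disjoint hdisj, leaves, Finset.card_union_of_disjoint hlr,
      ← ihl hl, ← ihr hr]
    ring

theorem topSet_subset_internalVertices (t : PhyloTree) (x : Finset ℕ) :
    t.topSet x ⊆ t.internalVertices := by
  refine Finset.monotone_filter_right _ fun s _ hs => ?_
  cases s <;> simp_all [isTopOf, isInternal]

theorem topSet_empty (t : PhyloTree) : t.topSet ∅ = ∅ :=
  Finset.filter_false_of_mem fun s _ => by cases s <;> simp [isTopOf]

theorem mrcaSet_eq_of_mem_subtrees {l r : PhyloTree} {p : Finset ℕ}
    (hp : p ⊆ (node l r).leaves) (hpl : (p ∩ l.leaves).Nonempty) (hpr : (p ∩ r.leaves).Nonempty) :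
    ∀ {t : PhyloTree}, t.leafList.Nodup → node l r ∈ t.subtrees → t.mrcaSet p = node l r
  | leaf i, _, h => by simp [subtrees] at h
  | node L R, hnd, h => by
    obtain ⟨hL, hR, hLR⟩ := nodup_node_iff.1 hnd
    rw [subtrees, Finset.mem_insert, Finset.mem_union] at h
    rcases h with h | h | h
    · obtain ⟨rfl, rfl⟩ := node.inj h
      obtain ⟨a, ha⟩ := hpl
      obtain ⟨b, hb⟩ := hpr
      rw [mrcaSet, if_neg fun hsub => Finset.disjoint_left.1 hLR (hsub (Finset.mem_inter.1 hb).1)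
        (Finset.mem_inter.1 hb).2, if_neg fun hsub => Finset.disjoint_left.1 hLR
        (Finset.mem_inter.1 ha).2 (hsub (Finset.mem_inter.1 ha).1)]
    · rw [mrcaSet, if_pos (hp.trans (leaves_subset_of_mem_subtrees h))]
      exact mrcaSet_eq_of_mem_subtrees hp hpl hpr hL h
    · obtain ⟨a, ha⟩ := hpl
      have haR : a ∈ R.leaves := leaves_subset_of_mem_subtrees h
        (hp (Finset.mem_inter.1 ha).1)
      rw [mrcaSet, if_neg fun hsub => Finset.disjoint_left.1 hLR (hsub (Finset.mem_inter.1 ha).1)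
        haR, if_pos (hp.trans (leaves_subset_of_mem_subtrees h))]
      exact mrcaSet_eq_of_mem_subtrees hp ⟨a, ha⟩ hpr hR h

theorem topSet_pair {t : PhyloTree} (hnd : t.leafList.Nodup) {l r : PhyloTree}
    (hmem : node l r ∈ t.subtrees) {a b : ℕ} (ha : a ∈ l.leaves) (hb : b ∈ r.leaves) :
    t.topSet {a, b} = {node l r} := by
  have hlr := (nodup_node_iff.1 (nodup_of_mem_subtrees hmem hnd)).2.2
  have ha' : a ∉ r.leaves := Finset.disjoint_left.1 hlr ha
  have hb' : b ∉ l.leaves := Finset.disjoint_right.1 hlr hb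
  have hab : a ≠ b := by rintro rfl; exact ha' hb
  ext s
  rw [topSet, Finset.mem_filter, Finset.mem_singleton]
  constructor
  · rintro ⟨hs, htop⟩
    cases s with
    | leaf => simp [isTopOf] at htop
    | node l' r' =>
      simp only [isTopOf, Bool.and_eq_true, decide_eq_true_eq] at htop
      obtain ⟨hl', hr'⟩ := htop
      have hlr' := (nodup_node_iff.1 (nodup_of_mem_subtrees hs hnd)).2.2
      have hsplit : ({a, b} : Finset ℕ) ⊆ (node l' r').leaves := by
        have hcard : ({a, b} : Finset ℕ).card ≤ ({a, b} ∩ (node l' r').leaves).card := by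
          rw [leaves, Finset.inter_union_distrib_left, Finset.card_union_of_disjoint
            (hlr'.mono Finset.inter_subset_right Finset.inter_subset_right), Finset.card_pair hab]
          have := hl'.pos
          have := hr'.pos
          omega
        exact Finset.inter_eq_left.1
          (Finset.eq_of_subset_of_card_le Finset.inter_subset_left hcard)
      rw [← mrcaSet_eq_of_mem_subtrees hsplit (Finset.card_pos.1 hl'.pos)
        (Finset.card_pos.1 hr'.pos) hnd hs]
      exact mrcaSet_eq_of_mem_subtrees (by simp [leaves, Finset.insert_subset_iff, ha, hb])
        ⟨a, by simp [ha]⟩ ⟨b, by simp [hb]⟩ hnd hmem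
  · rintro rfl
    refine ⟨hmem, ?_⟩
    simp [isTopOf, Finset.insert_inter_of_mem ha, Finset.singleton_inter_of_notMem hb',
      Finset.insert_inter_of_notMem ha', Finset.singleton_inter_of_mem hb]

def cfnVars (t : PhyloTree) : Finset (Option PhyloTree) :=
  insert none (t.internalVertices.image some)

theorem card_cfnVars {n : ℕ} {t : PhyloTree} (h : IsPhylo n t) : t.cfnVars.card = n := by
  rw [cfnVars, Finset.card_insert_of_notMem (by simp),
    Finset.card_image_of_injective _ (Option.some_injective _),
    card_internalVertices_add_one h.1, h.leaves_eq, Finset.card_range]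

end PhyloTree

theorem phiCFNMC_X (n : ℕ) (t : PhyloTree) (x : EvenSubsets n) :
    phiCFNMC n t (X x) = X none * ∏ s ∈ t.topSet x.toNat, X (some s) :=
  aeval_X _ _

theorem phiCFNMC_range_le (n : ℕ) (t : PhyloTree) :
    (phiCFNMC n t).range ≤ supported ℂ (t.cfnVars : Set (Option PhyloTree)) := by
  rw [phiCFNMC, aeval_range, Algebra.adjoin_le_iff]
  rintro _ ⟨x, rfl⟩
  refine mul_mem (X_mem_supported.2 (by simp [PhyloTree.cfnVars])) (prod_mem fun s hs => ?_)
  exact X_mem_supported.2 (by simpa [PhyloTree.cfnVars] using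
    PhyloTree.topSet_subset_internalVertices t _ hs)

theorem phiCFNMC_X_empty (n : ℕ) (t : PhyloTree) :
    phiCFNMC n t (X ⟨∅, by simp⟩) = X none := by
  simp [phiCFNMC_X, EvenSubsets.toNat, PhyloTree.topSet_empty]

theorem exists_phiCFNMC_X_eq {n : ℕ} {t : PhyloTree} (h : t.IsPhylo n) {v : PhyloTree}
    (hv : v ∈ t.internalVertices) : ∃ x, phiCFNMC n t (X x) = X none * X (some v) := by
  obtain ⟨hsub, hint⟩ := Finset.mem_filter.1 hv
  cases v with
  | leaf => simp [PhyloTree.isInternal] at hint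
  | node l r =>
    obtain ⟨a, ha⟩ := l.leaves_nonempty
    obtain ⟨b, hb⟩ := r.leaves_nonempty
    have hlt {c : ℕ} (hc : c ∈ (PhyloTree.node l r).leaves) : c < n :=
      Finset.mem_range.1 (h.leaves_eq ▸ PhyloTree.leaves_subset_of_mem_subtrees hsub hc)
    have han := hlt (Finset.mem_union_left _ ha)
    have hbn := hlt (Finset.mem_union_right _ hb)
    have hab : a ≠ b := fun hab =>
      Finset.disjoint_left.1 (PhyloTree.nodup_node_iff.1
        (PhyloTree.nodup_of_mem_subtrees hsub h.1)).2.2 ha (hab ▸ hb)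
    refine ⟨pairIdx ⟨a, han⟩ ⟨b, hbn⟩ (by simpa using hab), ?_⟩
    have htop : (pairIdx ⟨a, han⟩ ⟨b, hbn⟩ (by simpa using hab)).toNat = {a, b} := by
      simp [pairIdx, EvenSubsets.toNat, Finset.image_insert]
    rw [phiCFNMC_X, htop, PhyloTree.topSet_pair h.1 hsub ha hb, Finset.prod_singleton]

theorem ringKrullDim_quotient_cfnIdeal_le {n : ℕ} {t : PhyloTree} (h : t.IsPhylo n) :
    ringKrullDim (MvPolynomial (EvenSubsets n) ℂ ⧸ cfnIdeal n t) ≤ n :=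
  ringKrullDim_le_of_trdeg_le <| (PhyloTree.card_cfnVars h) ▸
    trdeg_quotient_ker_le_card _ _ (phiCFNMC_range_le n t)

theorem le_ringKrullDim_quotient_cfnIdeal {n : ℕ} {t : PhyloTree} (h : t.IsPhylo n) :
    (n : WithBot ℕ∞) ≤ ringKrullDim (MvPolynomial (EvenSubsets n) ℂ ⧸ cfnIdeal n t) := by
  set L := t.internalVertices.toList
  have hn : L.length + 1 = n := by
    rw [Finset.length_toList, PhyloTree.card_internalVertices_add_one h.1, h.leaves_eq,
      Finset.card_range]
  -- `rank o` is the step at which the variable `o` is set to zero: the `b_v` in the order of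
  -- `L`, then `b₀`.
  let rank (o : Option PhyloTree) : ℕ := o.elim L.length L.idxOf
  let S (j : ℕ) : Set (Option PhyloTree) := {o | j ≤ rank o}
  refine le_ringKrullDim_quotient_ker _ S (fun i j hij o ho => hij.trans ho) fun i hi => ?_
  rcases Nat.lt_or_ge i L.length with hi | hi
  · obtain ⟨x, hx⟩ := exists_phiCFNMC_X_eq h (Finset.mem_toList.1 (L.getElem_mem hi))
    have hrank : rank (some L[i]) = i := (Finset.nodup_toList _).idxOf_getElem i hi
    refine ⟨X x, ?_, ?_⟩ <;> rw [hx, map_mul]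
    · rw [zeroOutside_X_of_notMem (S := S (i + 1)) (v := some L[i]) (by simp [S, hrank]),
        mul_zero]
    · rw [zeroOutside_X_of_mem (S := S i) (v := none) hi.le,
        zeroOutside_X_of_mem (S := S i) (v := some L[i]) hrank.ge]
      exact mul_ne_zero (X_ne_zero _) (X_ne_zero _)
  · refine ⟨X ⟨∅, by simp⟩, ?_, ?_⟩ <;> rw [phiCFNMC_X_empty]
    · exact zeroOutside_X_of_notMem (S := S (i + 1)) (v := none)
        (show ¬ i + 1 ≤ L.length by omega)
    · rw [zeroOutside_X_of_mem (S := S i) (v := none) (show i ≤ L.length by omega)]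
      exact X_ne_zero _

theorem ringKrullDim_quotient_cfnIdeal {n : ℕ} {t : PhyloTree} (h : t.IsPhylo n) :
    ringKrullDim (MvPolynomial (EvenSubsets n) ℂ ⧸ cfnIdeal n t) = n :=
  le_antisymm (ringKrullDim_quotient_cfnIdeal_le h) (le_ringKrullDim_quotient_cfnIdeal h)

/-- The Krull dimension of the CFN-MC toric variety `R/I_T` depends only on the number
of leaves `n`, not on the topology of the rooted binary tree `T`. -/
theorem cfnIdeal_quotient_krullDim_eq
    (n : ℕ) (t1 t2 : PhyloTree)
    (h1 : PhyloTree.IsPhylo n t1) (h2 : PhyloTree.IsPhylo n t2) :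
    ringKrullDim (MvPolynomial (EvenSubsets n) ℂ ⧸ cfnIdeal n t1) =
      ringKrullDim (MvPolynomial (EvenSubsets n) ℂ ⧸ cfnIdeal n t2) := by
  rw [ringKrullDim_quotient_cfnIdeal h1, ringKrullDim_quotient_cfnIdeal h2]
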